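/- If a finite set P of points in the plane is in general position (no square in any orientation has five or more contact pairs among P), then there are only finitely many empty squares among P having four contact pairs. -/

import Mathlib

open Real Set

/-- The four side labels of a square. -/
inductive SqSide : Type
  | top
  | right
  | bottom
  | left
  deriving DecidableEq

/-- A (solid, closed) square in the plane, given by its center, its radius `r`
(half the side length) and its orientation `θ`. -/
structure Square : Type where
  center : ℝ × ℝ
  r : ℝ
  θ : ℝ

namespace Square

/-- The local `x`-coordinate of a point in the rotated frame of the square. -/
noncomputable def lx (S : Square) (p : ℝ × ℝ) : ℝ :=
  (p.1 - S.center.1) * Real.cos S.θ + (p.2 - S.center.2) * Real.sin S.θ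

/-- The local `y`-coordinate of a point in the rotated frame of the square. -/
noncomputable def ly (S : Square) (p : ℝ × ℝ) : ℝ :=
  -(p.1 - S.center.1) * Real.sin S.θ + (p.2 - S.center.2) * Real.cos S.θ

/-- A valid parametrization: nonnegative radius and orientation in `[0, π/2)`.
Every geometric square (with sides parallel to the directions `θ` and `θ + π/2`
for some `θ`) has such a parametrization, which is unique when `0 < r`. -/
def Valid (S : Square) : Prop :=
  0 ≤ S.r ∧ 0 ≤ S.θ ∧ S.θ < Real.pi / 2

/-- Membership in the closed solid square. -/
def Mem (S : Square) (p : ℝ × ℝ) : Prop :=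
  |S.lx p| ≤ S.r ∧ |S.ly p| ≤ S.r

/-- The square as a subset of the plane. -/
def toSet (S : Square) : Set (ℝ × ℝ) :=
  {p | S.Mem p}

/-- Membership in the interior of the square. -/
def InteriorMem (S : Square) (p : ℝ × ℝ) : Prop :=
  |S.lx p| < S.r ∧ |S.ly p| < S.r

/-- `p` lies on the closed side of `S` labeled `a` (sides include their endpoints). -/
def OnSide (S : Square) (a : SqSide) (p : ℝ × ℝ) : Prop :=
  match a with
  | SqSide.top    => S.ly p = S.r ∧ |S.lx p| ≤ S.r
  | SqSide.bottom => S.ly p = -S.r ∧ |S.lx p| ≤ S.r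
  | SqSide.right  => S.lx p = S.r ∧ |S.ly p| ≤ S.r
  | SqSide.left   => S.lx p = -S.r ∧ |S.ly p| ≤ S.r

/-- `p` lies on the boundary of `S`. -/
def OnBoundary (S : Square) (p : ℝ × ℝ) : Prop :=
  ∃ a : SqSide, S.OnSide a p

/-- `S` is a square in orientation `φ`, i.e. its sides are parallel to the
directions `φ` and `φ + π/2` (orientations are taken modulo `π/2`). -/
def InOrientation (S : Square) (φ : ℝ) : Prop :=
  ∃ k : ℤ, φ - S.θ = (k : ℝ) * (Real.pi / 2)

/-- The opposite side label. -/
def _root_.SqSide.opp : SqSide → SqSide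
  | SqSide.top => SqSide.bottom
  | SqSide.bottom => SqSide.top
  | SqSide.left => SqSide.right
  | SqSide.right => SqSide.left

end Square

/-- The set of contact pairs of the square `S` with respect to the point set `P`:
pairs `(p, a)` with `p ∈ P` lying on the side of `S` labeled `a`. -/
def contactPairs (P : Finset (ℝ × ℝ)) (S : Square) : Set ((ℝ × ℝ) × SqSide) :=
  {pa | pa.1 ∈ P ∧ S.OnSide pa.2 pa.1}

/-- The set of contact points of `S`: points of `P` on the boundary of `S`. -/
def contactPoints (P : Finset (ℝ × ℝ)) (S : Square) : Set (ℝ × ℝ) :=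
  {p | p ∈ P ∧ S.OnBoundary p}

/-- `S` is an empty square among `P`: a (validly parametrized) square whose
interior contains no point of `P`. -/
def IsEmptySquare (P : Finset (ℝ × ℝ)) (S : Square) : Prop :=
  S.Valid ∧ ∀ p ∈ P, ¬ S.InteriorMem p

/-- `P` is in general position: no square in any orientation has five or more
contact pairs among `P`. -/
def GenPos (P : Finset (ℝ × ℝ)) : Prop :=
  ∀ S : Square, S.Valid → (contactPairs P S).ncard ≤ 4

/-- A `4`-square: an empty square with exactly four contact pairs. -/
def Is4Square (P : Finset (ℝ × ℝ)) (S : Square) : Prop :=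
  IsEmptySquare P S ∧ (contactPairs P S).ncard = 4

/-- A nontrivial `4`-square: a `4`-square which is not a degenerate
single-point square (i.e. it has positive radius). -/
def IsNontrivial4Square (P : Finset (ℝ × ℝ)) (S : Square) : Prop :=
  Is4Square P S ∧ 0 < S.r

/-- A `(4,k)`-square: a `4`-square with exactly `k` contact points. -/
def Is4kSquare (P : Finset (ℝ × ℝ)) (k : ℕ) (S : Square) : Prop :=
  Is4Square P S ∧ (contactPoints P S).ncard = k

/-- `S` is stapled: some side of `S` contains two distinct points of `P`. -/
def IsStapled (P : Finset (ℝ × ℝ)) (S : Square) : Prop :=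
  ∃ a : SqSide, ∃ p ∈ P, ∃ q ∈ P, p ≠ q ∧ S.OnSide a p ∧ S.OnSide a q

/-!
A square of radius `0` is a single point of `P`, so it suffices to show that a square of positive
radius with four contact pairs is determined by its set of contact pairs, a subset of the finite
set `P × SqSide`.

By general position such a square can neither be slid along two opposite sides nor shrunk towards
a corner, since it would pick up a fifth contact; hence at most one of its sides carries no
contact. Three side lines of a known orientation determine the square, so it remains to pin down
the orientation. Two contact points on one side do this. Otherwise the top, right, bottom and left
sides carry one point `pt`, `pr`, `pb`, `pl` each, and a second square of another orientation
through the same contacts forces `pr - pl` to be `pt - pb` turned by a right angle. Then no two of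
the points share a corner (else `pt - pb` would be orthogonal to both orientations), and the square
can be turned through a half turn keeping the four points on its side lines; before its radius
changes sign one of the points reaches a corner, which is a fifth contact.
-/

instance : Fintype SqSide :=
  ⟨{.top, .right, .bottom, .left}, fun a => by cases a <;> simp⟩

namespace SqSide

def prev : SqSide → SqSide
  | top => left
  | right => top
  | bottom => right
  | left => bottom

theorem prev_bijective : Function.Bijective prev := by decide

end SqSide

namespace Square

variable {S S' : Square} {p q : ℝ × ℝ} {a : SqSide} {u v r : ℝ}

theorem lx_sub_lx (S : Square) (p q : ℝ × ℝ) :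
    S.lx p - S.lx q = (p.1 - q.1) * cos S.θ + (p.2 - q.2) * sin S.θ := by
  simp only [lx]; ring

theorem ly_sub_ly (S : Square) (p q : ℝ × ℝ) :
    S.ly p - S.ly q = (p.2 - q.2) * cos S.θ - (p.1 - q.1) * sin S.θ := by
  simp only [ly]; ring

theorem eq_center_of_lx_of_ly (hx : S.lx p = 0) (hy : S.ly p = 0) : p = S.center := by
  have hp := sin_sq_add_cos_sq S.θ
  simp only [lx, ly] at hx hy
  ext
  · linear_combination cos S.θ * hx - sin S.θ * hy - (p.1 - S.center.1) * hp
  · linear_combination sin S.θ * hx + cos S.θ * hy - (p.2 - S.center.2) * hp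

theorem Mem.r_nonneg (h : S.Mem p) : 0 ≤ S.r :=
  (abs_nonneg _).trans h.1

theorem OnSide.mem (h : S.OnSide a p) : S.Mem p := by
  cases a
  · exact ⟨h.2, by rw [h.1, abs_of_nonneg ((abs_nonneg _).trans h.2)]⟩
  · exact ⟨by rw [h.1, abs_of_nonneg ((abs_nonneg _).trans h.2)], h.2⟩
  · exact ⟨h.2, by rw [h.1, abs_neg, abs_of_nonneg ((abs_nonneg _).trans h.2)]⟩
  · exact ⟨by rw [h.1, abs_neg, abs_of_nonneg ((abs_nonneg _).trans h.2)], h.2⟩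

theorem Mem.onSide_right_or_left (h : S.Mem p) (hx : |S.lx p| = S.r) :
    S.OnSide .right p ∨ S.OnSide .left p :=
  (abs_eq h.r_nonneg).1 hx |>.imp (⟨·, h.2⟩) (⟨·, h.2⟩)

theorem Mem.onSide_top_or_bottom (h : S.Mem p) (hy : |S.ly p| = S.r) :
    S.OnSide .top p ∨ S.OnSide .bottom p :=
  (abs_eq h.r_nonneg).1 hy |>.imp (⟨·, h.1⟩) (⟨·, h.1⟩)

theorem eq_center_of_mem (h : S.Mem p) (hr : S.r = 0) : p = S.center := by
  rw [Mem, hr, abs_nonpos_iff, abs_nonpos_iff] at h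
  exact eq_center_of_lx_of_ly h.1 h.2

theorem toSet_eq_singleton (hr : S.r = 0) : S.toSet = {S.center} := by
  ext p
  refine ⟨fun h => eq_center_of_mem h hr, ?_⟩
  rintro rfl
  simp [toSet, Mem, lx, ly, hr]

def OnLine (S : Square) : SqSide → ℝ × ℝ → Prop
  | .top, p => S.ly p = S.r
  | .right, p => S.lx p = S.r
  | .bottom, p => S.ly p = -S.r
  | .left, p => S.lx p = -S.r

theorem OnSide.onLine (h : S.OnSide a p) : S.OnLine a p := by
  cases a <;> exact h.1

theorem eq_of_θ_eq_of_onLine (hθ : S.θ = S'.θ) (a : SqSide)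
    (h : ∀ b, b ≠ a → ∃ p, S.OnLine b p ∧ S'.OnLine b p) : S = S' := by
  have hx : ∀ p, S.lx p - S'.lx p = S.lx S'.center := fun p => by simp only [lx, hθ]; ring
  have hy : ∀ p, S.ly p - S'.ly p = S.ly S'.center := fun p => by simp only [ly, hθ]; ring
  have ht : a ≠ .top → S.r - S'.r = S.ly S'.center := fun ha => by
    obtain ⟨p, (hp : S.ly p = S.r), (hp' : S'.ly p = S'.r)⟩ := h .top ha.symm
    linear_combination hp.symm + hp' + hy p
  have hr : a ≠ .right → S.r - S'.r = S.lx S'.center := fun ha => by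
    obtain ⟨p, (hp : S.lx p = S.r), (hp' : S'.lx p = S'.r)⟩ := h .right ha.symm
    linear_combination hp.symm + hp' + hx p
  have hb : a ≠ .bottom → S.r - S'.r = -S.ly S'.center := fun ha => by
    obtain ⟨p, (hp : S.ly p = -S.r), (hp' : S'.ly p = -S'.r)⟩ := h .bottom ha.symm
    linear_combination hp - hp' - hy p
  have hl : a ≠ .left → S.r - S'.r = -S.lx S'.center := fun ha => by
    obtain ⟨p, (hp : S.lx p = -S.r), (hp' : S'.lx p = -S'.r)⟩ := h .left ha.symm
    linear_combination hp - hp' - hx p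
  obtain ⟨hrr, hc⟩ : S.r = S'.r ∧ S'.center = S.center := by
    suffices S.r = S'.r ∧ S.lx S'.center = 0 ∧ S.ly S'.center = 0 from
      ⟨this.1, eq_center_of_lx_of_ly this.2.1 this.2.2⟩
    cases a <;> simp only [ne_eq, reduceCtorEq, not_false_eq_true, forall_const] at ht hr hb hl <;>
      refine ⟨?_, ?_, ?_⟩ <;> linarith
  cases S
  cases S'
  simp_all

noncomputable def shift (S : Square) (u v r : ℝ) : Square where
  center := (S.center.1 + u * cos S.θ - v * sin S.θ, S.center.2 + u * sin S.θ + v * cos S.θ)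
  r := r
  θ := S.θ

@[simp]
theorem shift_r : (S.shift u v r).r = r := rfl

theorem lx_shift : (S.shift u v r).lx p = S.lx p - u := by
  simp only [shift, lx]
  linear_combination -u * sin_sq_add_cos_sq S.θ

theorem ly_shift : (S.shift u v r).ly p = S.ly p - v := by
  simp only [shift, ly]
  linear_combination -v * sin_sq_add_cos_sq S.θ

noncomputable def rotate (S : Square) : Square :=
  { S with θ := S.θ + π / 2 }

theorem lx_rotate : S.rotate.lx p = S.ly p := by
  simp only [rotate, lx, ly, cos_add_pi_div_two, sin_add_pi_div_two]; ring

theorem ly_rotate : S.rotate.ly p = -S.lx p := by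
  simp only [rotate, lx, ly, cos_add_pi_div_two, sin_add_pi_div_two]; ring

@[simp]
theorem onSide_rotate : S.rotate.OnSide a p ↔ S.OnSide a.prev p := by
  have hr : S.rotate.r = S.r := rfl
  cases a <;>
    simp only [OnSide, SqSide.prev, lx_rotate, ly_rotate, hr, abs_neg, neg_eq_iff_eq_neg, neg_neg]

end Square

open Square

theorem contactPairs_subset (P : Finset (ℝ × ℝ)) (S : Square) :
    contactPairs P S ⊆ (P : Set (ℝ × ℝ)) ×ˢ univ :=
  fun _ hx => ⟨hx.1, trivial⟩

theorem contactPairs_finite (P : Finset (ℝ × ℝ)) (S : Square) : (contactPairs P S).Finite :=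
  (P.finite_toSet.prod finite_univ).subset (contactPairs_subset P S)

theorem ncard_contactPairs_rotate (P : Finset (ℝ × ℝ)) (S : Square) :
    (contactPairs P S.rotate).ncard = (contactPairs P S).ncard := by
  have hb := SqSide.prev_bijective
  have : contactPairs P S.rotate = Prod.map id SqSide.prev ⁻¹' contactPairs P S := by
    ext x
    simp [contactPairs]
  rw [this, ncard_preimage_of_injective_subset_range (Function.injective_id.prodMap hb.1)]
  simp [(Function.surjective_id.prodMap hb.2).range_eq]

def IsOccupied (P : Finset (ℝ × ℝ)) (S : Square) (a : SqSide) : Prop :=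
  ∃ p, (p, a) ∈ contactPairs P S

@[simp]
theorem isOccupied_rotate {P : Finset (ℝ × ℝ)} {S : Square} {a : SqSide} :
    IsOccupied P S.rotate a ↔ IsOccupied P S a.prev := by
  simp [IsOccupied, contactPairs]

theorem isOccupied_of_not_isStapled {P : Finset (ℝ × ℝ)} {S : Square}
    (h4 : (contactPairs P S).ncard = 4) (hst : ¬IsStapled P S) (a : SqSide) :
    IsOccupied P S a := by
  by_contra ha
  have h3 : ({a}ᶜ : Set SqSide).ncard < (contactPairs P S).ncard := by
    rw [h4, ncard_compl, ncard_singleton, Nat.card_eq_fintype_card]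
    decide
  obtain ⟨x, hx, y, hy, hxy, hside⟩ :=
    exists_ne_map_eq_of_ncard_lt_of_maps_to h3 (f := Prod.snd)
      fun x hx hxa => ha ⟨x.1, hxa ▸ hx⟩
  exact hst ⟨x.2, x.1, hx.1, y.1, hy.1, fun h => hxy (Prod.ext h hside), hx.2, hside ▸ hy.2⟩

theorem eq_zero_of_cos_sin {θ θ' x y : ℝ} (hs : sin (θ - θ') ≠ 0)
    (h : x * cos θ + y * sin θ = 0) (h' : x * cos θ' + y * sin θ' = 0) : x = 0 ∧ y = 0 := by
  rw [sin_sub] at hs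
  constructor
  · refine (mul_eq_zero.1 (?_ : x * (sin θ * cos θ' - cos θ * sin θ') = 0)).resolve_right hs
    linear_combination sin θ * h' - sin θ' * h
  · refine (mul_eq_zero.1 (?_ : y * (sin θ * cos θ' - cos θ * sin θ') = 0)).resolve_right hs
    linear_combination cos θ' * h - cos θ * h'

namespace Square

variable {S S' : Square} {p q pt pr pb pl : ℝ × ℝ}

theorem Valid.sin_sub_ne_zero (hV : S.Valid) (hV' : S'.Valid) (h : S.θ ≠ S'.θ) :
    sin (S.θ - S'.θ) ≠ 0 := by
  have := pi_pos
  obtain ⟨-, h0, h1⟩ := hV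
  obtain ⟨-, h0', h1'⟩ := hV'
  rw [Ne, sin_eq_zero_iff_of_lt_of_lt (by linarith) (by linarith), sub_eq_zero]
  exact h

theorem eq_of_lx_eq (hs : sin (S.θ - S'.θ) ≠ 0) (h : S.lx p = S.lx q)
    (h' : S'.lx p = S'.lx q) : p = q := by
  obtain ⟨h1, h2⟩ := eq_zero_of_cos_sin (x := p.1 - q.1) (y := p.2 - q.2) hs
    (by rw [← lx_sub_lx, h, sub_self]) (by rw [← lx_sub_lx, h', sub_self])
  ext <;> linarith

theorem eq_of_ly_eq (hs : sin (S.θ - S'.θ) ≠ 0) (h : S.ly p = S.ly q)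
    (h' : S'.ly p = S'.ly q) : p = q := by
  obtain ⟨h1, h2⟩ := eq_zero_of_cos_sin (x := p.2 - q.2) (y := q.1 - p.1) hs
    (by linear_combination (S.ly_sub_ly p q).symm + h)
    (by linear_combination (S'.ly_sub_ly p q).symm + h')
  ext <;> linarith

theorem rotated_of_onLine (hs : sin (S.θ - S'.θ) ≠ 0)
    (ht : S.OnLine .top pt) (hr : S.OnLine .right pr) (hb : S.OnLine .bottom pb)
    (hl : S.OnLine .left pl) (ht' : S'.OnLine .top pt) (hr' : S'.OnLine .right pr)
    (hb' : S'.OnLine .bottom pb) (hl' : S'.OnLine .left pl) :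
    pr.1 - pl.1 = pt.2 - pb.2 ∧ pr.2 - pl.2 = pb.1 - pt.1 := by
  have key : ∀ T : Square, T.OnLine .top pt → T.OnLine .right pr → T.OnLine .bottom pb →
      T.OnLine .left pl → (pr.1 - pl.1 - (pt.2 - pb.2)) * cos T.θ
        + (pr.2 - pl.2 - (pb.1 - pt.1)) * sin T.θ = 0 := by
    intro T (ht : T.ly pt = T.r) (hr : T.lx pr = T.r) (hb : T.ly pb = -T.r) (hl : T.lx pl = -T.r)
    linear_combination T.ly_sub_ly pt pb - T.lx_sub_lx pr pl + hr - hl - ht + hb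
  obtain ⟨h1, h2⟩ := eq_zero_of_cos_sin hs (key S ht hr hb hl) (key S' ht' hr' hb' hl')
  exact ⟨by linarith, by linarith⟩

theorem lx_eq_of_corner (ht : S.OnSide .top pt) (hr : S.OnSide .right pr)
    (hb : S.OnSide .bottom pb) (hl : S.OnSide .left pl)
    (h₁ : pr.1 - pl.1 = pt.2 - pb.2) (h₂ : pr.2 - pl.2 = pb.1 - pt.1)
    (hc : pt = pr ∨ pt = pl ∨ pb = pr ∨ pb = pl) : S.lx pt = S.lx pb := by
  -- both summands have the same sign at a shared corner
  have hsum : (S.ly pr - S.ly pl) + (S.lx pt - S.lx pb) = 0 := by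
    linear_combination S.ly_sub_ly pr pl + S.lx_sub_lx pt pb - sin S.θ * h₁ + cos S.θ * h₂
  have := abs_le.1 ht.2; have := abs_le.1 hr.2; have := abs_le.1 hb.2; have := abs_le.1 hl.2
  have := ht.1; have := hr.1; have := hb.1; have := hl.1
  rcases hc with rfl | rfl | rfl | rfl <;> linarith

end Square

theorem IsStapled.θ_eq {P : Finset (ℝ × ℝ)} {S S' : Square} (hst : IsStapled P S)
    (hV : S.Valid) (hV' : S'.Valid) (hEq : contactPairs P S = contactPairs P S') :
    S.θ = S'.θ := by
  obtain ⟨a, p, hp, q, hq, hpq, hpS, hqS⟩ := hst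
  have hpS' : (p, a) ∈ contactPairs P S' := hEq ▸ ⟨hp, hpS⟩
  have hqS' : (q, a) ∈ contactPairs P S' := hEq ▸ ⟨hq, hqS⟩
  by_contra hne
  apply hpq
  have hs := hV.sin_sub_ne_zero hV' hne
  cases a
  · exact eq_of_ly_eq hs (hpS.1.trans hqS.1.symm) (hpS'.2.1.trans hqS'.2.1.symm)
  · exact eq_of_lx_eq hs (hpS.1.trans hqS.1.symm) (hpS'.2.1.trans hqS'.2.1.symm)
  · exact eq_of_ly_eq hs (hpS.1.trans hqS.1.symm) (hpS'.2.1.trans hqS'.2.1.symm)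
  · exact eq_of_lx_eq hs (hpS.1.trans hqS.1.symm) (hpS'.2.1.trans hqS'.2.1.symm)

/-- The square of orientation `φ` whose top and bottom lines pass through `pt` and `pb` and whose
center projects onto the midpoint of `pr` and `pl` along its horizontal axis. -/
noncomputable def rotatingSquare (pt pr pb pl : ℝ × ℝ) (φ : ℝ) : Square :=
  let M := ((pr.1 + pl.1) * cos φ + (pr.2 + pl.2) * sin φ) / 2
  let N := ((pt.2 + pb.2) * cos φ - (pt.1 + pb.1) * sin φ) / 2
  ⟨(M * cos φ - N * sin φ, M * sin φ + N * cos φ),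
    ((pt.2 - pb.2) * cos φ - (pt.1 - pb.1) * sin φ) / 2, φ⟩

namespace rotatingSquare

variable {p pt pr pb pl : ℝ × ℝ} {φ : ℝ}

theorem r_eq : (rotatingSquare pt pr pb pl φ).r =
    ((pt.2 - pb.2) * cos φ - (pt.1 - pb.1) * sin φ) / 2 := rfl

theorem lx_eq : (rotatingSquare pt pr pb pl φ).lx p =
    (p.1 - (pr.1 + pl.1) / 2) * cos φ + (p.2 - (pr.2 + pl.2) / 2) * sin φ := by
  simp only [rotatingSquare, Square.lx]
  linear_combination (-((pr.1 + pl.1) * cos φ + (pr.2 + pl.2) * sin φ) / 2) * sin_sq_add_cos_sq φ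

theorem ly_eq : (rotatingSquare pt pr pb pl φ).ly p =
    (p.2 - (pt.2 + pb.2) / 2) * cos φ - (p.1 - (pt.1 + pb.1) / 2) * sin φ := by
  simp only [rotatingSquare, Square.ly]
  linear_combination (-((pt.2 + pb.2) * cos φ - (pt.1 + pb.1) * sin φ) / 2) * sin_sq_add_cos_sq φ

theorem onLine (h₁ : pr.1 - pl.1 = pt.2 - pb.2) (h₂ : pr.2 - pl.2 = pb.1 - pt.1) (φ : ℝ) :
    (rotatingSquare pt pr pb pl φ).OnLine .top pt ∧
      (rotatingSquare pt pr pb pl φ).OnLine .right pr ∧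
      (rotatingSquare pt pr pb pl φ).OnLine .bottom pb ∧
      (rotatingSquare pt pr pb pl φ).OnLine .left pl := by
  simp only [Square.OnLine, lx_eq, ly_eq, r_eq]
  refine ⟨by ring, ?_, by ring, ?_⟩
  · linear_combination (cos φ * h₁ + sin φ * h₂) / 2
  · linear_combination -(cos φ * h₁ + sin φ * h₂) / 2

/-- The signed radius of `rotatingSquare` changes sign over a half turn, so by continuity the
smallest slack of the four points on their sides vanishes at some orientation. -/
theorem exists_corner {S : Square} (hr : 0 < S.r) (ht : S.OnSide .top pt)
    (hr' : S.OnSide .right pr) (hb : S.OnSide .bottom pb) (hl : S.OnSide .left pl)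
    (h₁ : pr.1 - pl.1 = pt.2 - pb.2) (h₂ : pr.2 - pl.2 = pb.1 - pt.1) :
    ∃ φ, let U := rotatingSquare pt pr pb pl φ
      U.OnSide .top pt ∧ U.OnSide .right pr ∧ U.OnSide .bottom pb ∧ U.OnSide .left pl ∧
      (|U.lx pt| = U.r ∨ |U.lx pb| = U.r ∨ |U.ly pr| = U.r ∨ |U.ly pl| = U.r) := by
  set T := rotatingSquare pt pr pb pl
  have hS : T S.θ = S := by
    obtain ⟨ht', hr'', hb', hl'⟩ := onLine h₁ h₂ S.θ
    refine eq_of_θ_eq_of_onLine rfl .top fun b _ => ?_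
    cases b
    exacts [⟨pt, ht', ht.onLine⟩, ⟨pr, hr'', hr'.onLine⟩, ⟨pb, hb', hb.onLine⟩,
      ⟨pl, hl', hl.onLine⟩]
  let g φ := min (min ((T φ).r - |(T φ).lx pt|) ((T φ).r - |(T φ).lx pb|))
    (min ((T φ).r - |(T φ).ly pr|) ((T φ).r - |(T φ).ly pl|))
  have hg : Continuous g := by
    simp only [g, T, r_eq, lx_eq, ly_eq]
    fun_prop
  have hg₀ : 0 ≤ g S.θ := by
    simp only [g, hS, le_min_iff, sub_nonneg]
    exact ⟨⟨ht.2, hb.2⟩, hr'.2, hl.2⟩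
  have hgπ : g (S.θ + π) < 0 := by
    have hneg : (T (S.θ + π)).r = -(T S.θ).r := by
      simp only [T, r_eq, cos_add_pi, sin_add_pi]
      ring
    rw [hS] at hneg
    exact (min_le_left _ _).trans_lt <| (min_le_left _ _).trans_lt <| by
      linarith [abs_nonneg ((T (S.θ + π)).lx pt)]
  obtain ⟨φ, hφ⟩ := intermediate_value_univ (S.θ + π) S.θ hg ⟨hgπ.le, hg₀⟩
  obtain ⟨ht', hr'', hb', hl'⟩ := onLine h₁ h₂ φ
  obtain ⟨⟨h1, h2⟩, h3, h4⟩ := by simpa only [g, le_min_iff, sub_nonneg] using hφ.symm.le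
  refine ⟨φ, ⟨ht', h1⟩, ⟨hr'', h3⟩, ⟨hb', h2⟩, ⟨hl', h4⟩, ?_⟩
  by_contra! hne
  have : 0 < g φ :=
    lt_min (lt_min (sub_pos.2 (h1.lt_of_ne hne.1)) (sub_pos.2 (h2.lt_of_ne hne.2.1)))
      (lt_min (sub_pos.2 (h3.lt_of_ne hne.2.2.1)) (sub_pos.2 (h4.lt_of_ne hne.2.2.2)))
  exact this.ne' hφ

end rotatingSquare

namespace GenPos

variable {P : Finset (ℝ × ℝ)} {S S' : Square} {pt pr pb pl : ℝ × ℝ}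

theorem ncard_contactPairs_le (hP : GenPos P) (S : Square) : (contactPairs P S).ncard ≤ 4 := by
  rcases lt_or_ge S.r 0 with hr | hr
  · have : contactPairs P S = ∅ :=
      eq_empty_of_forall_notMem fun x hx => hr.not_ge hx.2.mem.r_nonneg
    simp [this]
  · have hper :
        Function.Periodic (fun θ => (contactPairs P ⟨S.center, S.r, θ⟩).ncard) (π / 2) :=
      fun θ => ncard_contactPairs_rotate P ⟨S.center, S.r, θ⟩
    obtain ⟨θ, hθ, heq⟩ := hper.exists_mem_Ico₀ (by positivity) S.θ
    exact heq ▸ hP ⟨S.center, S.r, θ⟩ ⟨hr, hθ.1, hθ.2⟩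

theorem contactPairs_eq_of_subset (hP : GenPos P) {C : Set ((ℝ × ℝ) × SqSide)}
    (hC : C ⊆ contactPairs P S) (h4 : C.ncard = 4) : contactPairs P S = C :=
  (eq_of_subset_of_ncard_le hC (h4 ▸ hP.ncard_contactPairs_le S) (contactPairs_finite P S)).symm

/-- Shrinking `S` towards its top right corner keeps all contacts until a contact point reaches
the left or the bottom side. -/
theorem isOccupied_bottom_or_left (hP : GenPos P) (h4 : (contactPairs P S).ncard = 4) :
    IsOccupied P S .bottom ∨ IsOccupied P S .left := by
  by_contra! ⟨hb, hl⟩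
  set C := contactPairs P S
  obtain ⟨x₀, hx₀, hmin⟩ := C.exists_min_image (fun x => min (S.lx x.1) (S.ly x.1))
    (contactPairs_finite P S) (nonempty_of_ncard_ne_zero (by omega))
  set μ := min (S.lx x₀.1) (S.ly x₀.1) with hμ
  set t := (S.r + μ) / 2 with ht
  set T := S.shift t t (S.r - t)
  have hmem : ∀ x ∈ C, T.Mem x.1 := fun x hx => by
    have ⟨h1, h2⟩ := hx.2.mem
    have h3 := hmin x hx
    simp only [le_min_iff] at h3
    simp only [Mem, T, lx_shift, ly_shift, shift_r, abs_le] at h1 h2 ⊢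
    constructor <;> constructor <;> linarith
  have hsub : C ⊆ contactPairs P T := by
    rintro ⟨p, _ | _ | _ | _⟩ hx
    · exact ⟨hx.1, by simp only [T, ly_shift, hx.2.1, shift_r], (hmem _ hx).1⟩
    · exact ⟨hx.1, by simp only [T, lx_shift, hx.2.1, shift_r], (hmem _ hx).2⟩
    · exact (hb ⟨p, hx⟩).elim
    · exact (hl ⟨p, hx⟩).elim
  have hnew : (x₀.1, .left) ∈ contactPairs P T ∨ (x₀.1, .bottom) ∈ contactPairs P T := by
    rcases min_choice (S.lx x₀.1) (S.ly x₀.1) with h | h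
    · exact .inl ⟨hx₀.1, by simp only [T, lx_shift, shift_r]; linarith, (hmem _ hx₀).2⟩
    · exact .inr ⟨hx₀.1, by simp only [T, ly_shift, shift_r]; linarith, (hmem _ hx₀).1⟩
  rw [hP.contactPairs_eq_of_subset hsub h4] at hnew
  exact hnew.elim (fun h => hl ⟨_, h⟩) (fun h => hb ⟨_, h⟩)

/-- Translating `S` along its top and bottom sides keeps all contacts until a contact point
reaches the left side. -/
theorem isOccupied_left_or_right (hP : GenPos P) (h4 : (contactPairs P S).ncard = 4) :
    IsOccupied P S .left ∨ IsOccupied P S .right := by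
  by_contra! ⟨hl, hr⟩
  set C := contactPairs P S
  obtain ⟨x₀, hx₀, hmin⟩ := C.exists_min_image (fun x => S.lx x.1)
    (contactPairs_finite P S) (nonempty_of_ncard_ne_zero (by omega))
  set T := S.shift (S.r + S.lx x₀.1) 0 S.r
  have hmem : ∀ x ∈ C, T.Mem x.1 := fun x hx => by
    have ⟨h1, h2⟩ := hx.2.mem
    have h3 := hmin x hx
    have h₀ := (abs_le.1 hx₀.2.mem.1).1
    simp only [Mem, T, lx_shift, ly_shift, shift_r, abs_le, sub_zero] at h1 h2 ⊢
    constructor <;> constructor <;> linarith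
  have hsub : C ⊆ contactPairs P T := by
    rintro ⟨p, _ | _ | _ | _⟩ hx
    · exact ⟨hx.1, by simp only [T, ly_shift, hx.2.1, shift_r, sub_zero], (hmem _ hx).1⟩
    · exact (hr ⟨p, hx⟩).elim
    · exact ⟨hx.1, by simp only [T, ly_shift, hx.2.1, shift_r, sub_zero], (hmem _ hx).1⟩
    · exact (hl ⟨p, hx⟩).elim
  have hnew : (x₀.1, .left) ∈ contactPairs P T :=
    ⟨hx₀.1, by simp only [T, lx_shift, shift_r]; ring, (hmem _ hx₀).2⟩
  rw [hP.contactPairs_eq_of_subset hsub h4] at hnew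
  exact hl ⟨_, hnew⟩

theorem exists_forall_ne_isOccupied (hP : GenPos P) (h4 : (contactPairs P S).ncard = 4) :
    ∃ a, ∀ b, b ≠ a → IsOccupied P S b := by
  have hk : ∀ k, (contactPairs P (rotate^[k] S)).ncard = 4 := by
    intro k
    induction k with
    | zero => exact h4
    | succ k ih => rwa [Function.iterate_succ_apply', ncard_contactPairs_rotate]
  have hpair : ∀ a b, a ≠ b → IsOccupied P S a ∨ IsOccupied P S b := by
    -- applied to the rotations of `S`, the two cases cover all six pairs of sides
    have h0 := hP.isOccupied_bottom_or_left (hk 0)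
    have h1 := hP.isOccupied_bottom_or_left (hk 1)
    have h2 := hP.isOccupied_bottom_or_left (hk 2)
    have h3 := hP.isOccupied_bottom_or_left (hk 3)
    have h0' := hP.isOccupied_left_or_right (hk 0)
    have h1' := hP.isOccupied_left_or_right (hk 1)
    simp only [Function.iterate_succ_apply', Function.iterate_zero_apply, isOccupied_rotate,
      SqSide.prev] at h0 h1 h2 h3 h0' h1'
    intro a b hab
    cases a <;> cases b <;> tauto
  by_cases hall : ∀ a, IsOccupied P S a
  · exact ⟨.top, fun b _ => hall b⟩
  · obtain ⟨a, ha⟩ := not_forall.1 hall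
    exact ⟨a, fun b hb => (hpair a b hb.symm).resolve_left ha⟩

theorem shares_corner (hP : GenPos P) (hr : 0 < S.r)
    (ht : (pt, .top) ∈ contactPairs P S) (hr' : (pr, .right) ∈ contactPairs P S)
    (hb : (pb, .bottom) ∈ contactPairs P S) (hl : (pl, .left) ∈ contactPairs P S)
    (h₁ : pr.1 - pl.1 = pt.2 - pb.2) (h₂ : pr.2 - pl.2 = pb.1 - pt.1) :
    pt = pr ∨ pt = pl ∨ pb = pr ∨ pb = pl := by
  by_contra! ⟨htr, htl, hbr, hbl⟩
  obtain ⟨φ, hUt, hUr, hUb, hUl, hcorner⟩ :=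
    rotatingSquare.exists_corner hr ht.2 hr'.2 hb.2 hl.2 h₁ h₂
  set U := rotatingSquare pt pr pb pl φ
  set C : Set ((ℝ × ℝ) × SqSide) := {(pt, .top), (pr, .right), (pb, .bottom), (pl, .left)}
  have hC : C ⊆ contactPairs P U := by
    simp only [C, insert_subset_iff, singleton_subset_iff]
    exact ⟨⟨ht.1, hUt⟩, ⟨hr'.1, hUr⟩, ⟨hb.1, hUb⟩, ⟨hl.1, hUl⟩⟩
  have hC4 : C.ncard = 4 := by
    rw [ncard_insert_of_notMem (by simp), ncard_insert_of_notMem (by simp), ncard_pair (by simp)]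
  have hnew : ∃ x ∈ contactPairs P U, x ∉ C := by
    rcases hcorner with h | h | h | h
    · rcases hUt.mem.onSide_right_or_left h with h' | h'
      · exact ⟨(pt, .right), ⟨ht.1, h'⟩, by simp [C, htr]⟩
      · exact ⟨(pt, .left), ⟨ht.1, h'⟩, by simp [C, htl]⟩
    · rcases hUb.mem.onSide_right_or_left h with h' | h'
      · exact ⟨(pb, .right), ⟨hb.1, h'⟩, by simp [C, hbr]⟩
      · exact ⟨(pb, .left), ⟨hb.1, h'⟩, by simp [C, hbl]⟩
    · rcases hUr.mem.onSide_top_or_bottom h with h' | h'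
      · exact ⟨(pr, .top), ⟨hr'.1, h'⟩, by simp [C, htr.symm]⟩
      · exact ⟨(pr, .bottom), ⟨hr'.1, h'⟩, by simp [C, hbr.symm]⟩
    · rcases hUl.mem.onSide_top_or_bottom h with h' | h'
      · exact ⟨(pl, .top), ⟨hl.1, h'⟩, by simp [C, htl.symm]⟩
      · exact ⟨(pl, .bottom), ⟨hl.1, h'⟩, by simp [C, hbl.symm]⟩
  obtain ⟨x, hx, hxC⟩ := hnew
  exact hxC (hP.contactPairs_eq_of_subset hC hC4 ▸ hx)

theorem θ_eq_of_contactPairs_eq (hP : GenPos P) (hV : S.Valid) (hV' : S'.Valid)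
    (hr : 0 < S.r) (h4 : (contactPairs P S).ncard = 4)
    (hEq : contactPairs P S = contactPairs P S') : S.θ = S'.θ := by
  by_cases hst : IsStapled P S
  · exact hst.θ_eq hV hV' hEq
  by_contra hne
  have hs := hV.sin_sub_ne_zero hV' hne
  have hS' : ∀ {x}, x ∈ contactPairs P S → x ∈ contactPairs P S' := (hEq ▸ ·)
  obtain ⟨pt, ht⟩ := isOccupied_of_not_isStapled h4 hst .top
  obtain ⟨pr, hr'⟩ := isOccupied_of_not_isStapled h4 hst .right
  obtain ⟨pb, hb⟩ := isOccupied_of_not_isStapled h4 hst .bottom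
  obtain ⟨pl, hl⟩ := isOccupied_of_not_isStapled h4 hst .left
  obtain ⟨h₁, h₂⟩ := rotated_of_onLine hs ht.2.onLine hr'.2.onLine hb.2.onLine hl.2.onLine
    (hS' ht).2.onLine (hS' hr').2.onLine (hS' hb).2.onLine (hS' hl).2.onLine
  have hc := hP.shares_corner hr ht hr' hb hl h₁ h₂
  have htb : pt = pb := eq_of_lx_eq hs (lx_eq_of_corner ht.2 hr'.2 hb.2 hl.2 h₁ h₂ hc)
    (lx_eq_of_corner (hS' ht).2 (hS' hr').2 (hS' hb).2 (hS' hl).2 h₁ h₂ hc)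
  have : S.r = -S.r := ht.2.1.symm.trans (htb ▸ hb.2.1)
  linarith

theorem eq_of_contactPairs_eq (hP : GenPos P) (hV : S.Valid) (hV' : S'.Valid) (hr : 0 < S.r)
    (h4 : (contactPairs P S).ncard = 4) (hEq : contactPairs P S = contactPairs P S') : S = S' := by
  obtain ⟨a, ha⟩ := hP.exists_forall_ne_isOccupied h4
  refine eq_of_θ_eq_of_onLine (hP.θ_eq_of_contactPairs_eq hV hV' hr h4 hEq) a fun b hb => ?_
  obtain ⟨p, hp⟩ := ha b hb
  exact ⟨p, hp.2.onLine, (hEq ▸ hp : (p, b) ∈ contactPairs P S').2.onLine⟩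

end GenPos

/-- Lemma GP2. If `P` is in general position, then there are
only finitely many empty squares among `P` having four contact pairs. -/
theorem genPos_finitely_many_4squares (P : Finset (ℝ × ℝ)) (hP : GenPos P) :
    ({X : Set (ℝ × ℝ) | ∃ S : Square, IsEmptySquare P S ∧
        (contactPairs P S).ncard = 4 ∧ X = S.toSet}).Finite := by
  have hpos : {S : Square | S.Valid ∧ 0 < S.r ∧ (contactPairs P S).ncard = 4}.Finite := by
    refine Finite.of_finite_image (f := contactPairs P) ?_ ?_
    · refine (P.finite_toSet.prod finite_univ).finite_subsets.subset ?_
      rintro _ ⟨S, -, rfl⟩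
      exact contactPairs_subset P S
    · rintro S ⟨hV, hr, h4⟩ S' ⟨hV', -, -⟩ hEq
      exact hP.eq_of_contactPairs_eq hV hV' hr h4 hEq
  refine ((P.finite_toSet.image ({·})).union (hpos.image toSet)).subset ?_
  rintro _ ⟨S, ⟨hV, -⟩, h4, rfl⟩
  rcases hV.1.eq_or_lt with h0 | hr
  · obtain ⟨⟨p, a⟩, hp⟩ := nonempty_of_ncard_ne_zero (s := contactPairs P S) (by omega)
    refine .inl ⟨S.center, ?_, (toSet_eq_singleton h0.symm).symm⟩
    exact eq_center_of_mem hp.2.mem h0.symm ▸ hp.1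
  · exact .inr ⟨S, ⟨hV, hr, h4⟩, rfl⟩
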